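/- For every integer d ≥ 1 and every q ∈ ℂ with |q| < 1, writing ζ = exp(2πi/d), the following identity holds between absolutely convergent infinite products: ∏_{k=1}^{d−1} ( 2 sin(πk/d) · ∏_{n=1}^{∞} (1 − ζ^k q^n)(1 − ζ^{−k} q^n) ) = d · ∏_{n=1}^{∞} (1 − q^{dn})² / (1 − q^n)². -/

import Mathlib

/-!
Statement 16: For every integer `d ≥ 1` and every `q ∈ ℂ` with `|q| < 1`, writing
`ζ = exp(2πi/d)`, we have

`∏_{k=1}^{d−1} ( 2 sin(πk/d) ∏_{n≥1} (1 − ζ^k qⁿ)(1 − ζ^{−k} qⁿ) )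
   = d ∏_{n≥1} (1 − q^{dn})² / (1 − qⁿ)²`,

an identity of absolutely convergent infinite products.
-/

namespace RMV

open scoped BigOperators

open Complex Finset Polynomial

/-- Auxiliary multipliability lemma: if `|c| = 1` and `|q| < 1`, then the product
`∏ (1 - c q^{n+1})` converges. -/
private lemma mult_aux {c q : ℂ} (hc : ‖c‖ = 1) (hq : ‖q‖ < 1) :
    Multipliable fun n : ℕ => 1 - c * q ^ (n + 1) := by
  have habs : ∀ n : ℕ, ‖c * q ^ (n + 1)‖ = ‖q‖ ^ (n + 1) := by
    intro n; rw [norm_mul, norm_pow, hc, one_mul]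
  have hne : ∀ n : ℕ, 1 - c * q ^ (n + 1) ≠ 0 := by
    intro n h
    rw [sub_eq_zero] at h
    have h1 : ‖c * q ^ (n + 1)‖ < 1 := by
      rw [habs]; exact pow_lt_one₀ (norm_nonneg q) hq (Nat.succ_ne_zero n)
    rw [← h, norm_one] at h1
    exact lt_irrefl 1 h1
  have hsum : Summable fun n : ℕ => Complex.log (1 - c * q ^ (n + 1)) := by
    have hg : Summable fun n : ℕ => (3 / 2 : ℝ) * ‖q‖ ^ (n + 1) := by
      apply Summable.mul_left
      simpa [pow_succ] using
        (summable_geometric_of_lt_one (norm_nonneg q) hq).mul_right ‖q‖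
    refine Summable.of_norm_bounded_eventually hg ?_
    rw [Nat.cofinite_eq_atTop]
    have htend : Filter.Tendsto (fun n : ℕ => ‖q‖ ^ (n + 1)) Filter.atTop (nhds 0) :=
      (tendsto_pow_atTop_nhds_zero_of_lt_one (norm_nonneg q) hq).comp
        (Filter.tendsto_add_atTop_nat 1)
    filter_upwards [htend.eventually_le_const (by norm_num : (0 : ℝ) < 1 / 2)] with n hn
    have hb : ‖-(c * q ^ (n + 1))‖ ≤ 1 / 2 := by
      rw [norm_neg, habs]; exact hn
    have := Complex.norm_log_one_add_half_le_self hb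
    simp only [norm_neg, habs] at this
    simpa [sub_eq_add_neg] using this
  exact Complex.multipliable_of_summable_log hsum

theorem eta_theta_product_identity
    (d : ℕ) (hd : 1 ≤ d) (q : ℂ) (hq : ‖q‖ < 1) :
    (∀ k ∈ Finset.Icc 1 (d - 1),
      Multipliable fun n : ℕ =>
        (1 - Complex.exp (2 * (Real.pi : ℂ) * Complex.I / (d : ℂ)) ^ (k : ℤ)
            * q ^ (n + 1)) *
        (1 - Complex.exp (2 * (Real.pi : ℂ) * Complex.I / (d : ℂ)) ^ (-(k : ℤ))
            * q ^ (n + 1))) ∧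
    Multipliable (fun n : ℕ => (1 - q ^ (d * (n + 1))) ^ 2 / (1 - q ^ (n + 1)) ^ 2) ∧
    (∏ k ∈ Finset.Icc 1 (d - 1),
        (((2 * Real.sin (Real.pi * (k : ℝ) / (d : ℝ)) : ℝ) : ℂ) *
          ∏' n : ℕ,
            ((1 - Complex.exp (2 * (Real.pi : ℂ) * Complex.I / (d : ℂ)) ^ (k : ℤ)
                * q ^ (n + 1)) *
             (1 - Complex.exp (2 * (Real.pi : ℂ) * Complex.I / (d : ℂ)) ^ (-(k : ℤ))
                * q ^ (n + 1)))))
      = (d : ℂ) * ∏' n : ℕ, (1 - q ^ (d * (n + 1))) ^ 2 / (1 - q ^ (n + 1)) ^ 2 := by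
  have hd0 : d ≠ 0 := by omega
  set ζ : ℂ := Complex.exp (2 * (Real.pi : ℂ) * Complex.I / (d : ℂ)) with hζdef
  have hprim : IsPrimitiveRoot ζ d := Complex.isPrimitiveRoot_exp d hd0
  have hζ0 : ζ ≠ 0 := Complex.exp_ne_zero _
  have hζd : ζ ^ d = 1 := hprim.pow_eq_one
  have hζabs : ‖ζ‖ = 1 := by
    rw [hζdef, show 2 * (Real.pi : ℂ) * Complex.I / (d : ℂ)
        = ((2 * Real.pi / d : ℝ) : ℂ) * Complex.I by push_cast; ring,
      Complex.norm_exp]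
    simp
  have hdz : (d : ℂ) ≠ 0 := Nat.cast_ne_zero.mpr hd0
  -- multipliability of the k-factors
  have hM : ∀ k ∈ Finset.Icc 1 (d - 1),
      Multipliable fun n : ℕ =>
        (1 - ζ ^ (k : ℤ) * q ^ (n + 1)) * (1 - ζ ^ (-(k : ℤ)) * q ^ (n + 1)) := by
    intro k _
    have h1 : ‖ζ ^ (k : ℤ)‖ = 1 := by rw [norm_zpow, hζabs, one_zpow]
    have h2 : ‖ζ ^ (-(k : ℤ))‖ = 1 := by rw [norm_zpow, hζabs, one_zpow]
    exact (mult_aux h1 hq).mul (mult_aux h2 hq)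
  -- basic finset bookkeeping
  have hins : Finset.range d = insert 0 (Finset.Icc 1 (d - 1)) := by
    ext a
    simp only [Finset.mem_range, Finset.mem_insert, Finset.mem_Icc]
    omega
  have hnotmem : (0 : ℕ) ∉ Finset.Icc 1 (d - 1) := by simp
  -- the range-d product identity
  have hrange : ∀ x : ℂ, ∏ k ∈ Finset.range d, (1 - ζ ^ k * x) = 1 - x ^ d := by
    intro x
    have h := X_pow_sub_C_eq_prod hprim (by omega : 0 < d) (rfl : x ^ d = x ^ d)
    have h2 := congrArg (Polynomial.eval 1) h
    simp only [eval_sub, eval_pow, eval_X, eval_C, one_pow, eval_prod, eval_mul] at h2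
    exact h2.symm
  have hIcc : ∀ x : ℂ, (1 - x) * ∏ k ∈ Finset.Icc 1 (d - 1), (1 - ζ ^ k * x) = 1 - x ^ d := by
    intro x
    rw [← hrange x, hins, Finset.prod_insert hnotmem, pow_zero, one_mul]
  -- key pointwise identity over n
  have hkey : ∀ n : ℕ,
      (∏ k ∈ Finset.Icc 1 (d - 1),
        ((1 - ζ ^ (k : ℤ) * q ^ (n + 1)) * (1 - ζ ^ (-(k : ℤ)) * q ^ (n + 1))))
      = (1 - q ^ (d * (n + 1))) ^ 2 / (1 - q ^ (n + 1)) ^ 2 := by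
    intro n
    have hx1 : (1 : ℂ) - q ^ (n + 1) ≠ 0 := by
      intro h
      rw [sub_eq_zero] at h
      have h1 : ‖q ^ (n + 1)‖ < 1 := by
        rw [norm_pow]; exact pow_lt_one₀ (norm_nonneg q) hq (Nat.succ_ne_zero n)
      rw [← h, norm_one] at h1
      exact lt_irrefl 1 h1
    have hneg : ∏ k ∈ Finset.Icc 1 (d - 1), (1 - ζ ^ (-(k : ℤ)) * q ^ (n + 1))
        = ∏ k ∈ Finset.Icc 1 (d - 1), (1 - ζ ^ k * q ^ (n + 1)) := by
      refine Finset.prod_nbij' (fun k => d - k) (fun k => d - k) ?_ ?_ ?_ ?_ ?_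
      · intro a ha; simp only [Finset.mem_Icc] at ha ⊢; omega
      · intro a ha; simp only [Finset.mem_Icc] at ha ⊢; omega
      · intro a ha; simp only [Finset.mem_Icc] at ha; show d - (d - a) = a; omega
      · intro a ha; simp only [Finset.mem_Icc] at ha; show d - (d - a) = a; omega
      · intro a ha
        simp only [Finset.mem_Icc] at ha
        congr 2
        have hcast : ((d - a : ℕ) : ℤ) = (d : ℤ) - (a : ℤ) := by omega
        rw [← zpow_natCast ζ (d - a), hcast, zpow_sub₀ hζ0, zpow_natCast ζ d, hζd,
          zpow_neg, one_div]
    have hP : ∏ k ∈ Finset.Icc 1 (d - 1), (1 - ζ ^ k * q ^ (n + 1))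
        = (1 - q ^ (d * (n + 1))) / (1 - q ^ (n + 1)) := by
      rw [eq_div_iff hx1, mul_comm, hIcc (q ^ (n + 1)), ← pow_mul, Nat.mul_comm]
    simp only [zpow_natCast]
    rw [Finset.prod_mul_distrib, hneg, hP, div_mul_div_comm, ← sq, ← sq]
  -- the sine product
  have hI : Complex.exp ((Real.pi : ℂ) * Complex.I / 2) = Complex.I := by
    rw [show (Real.pi : ℂ) * Complex.I / 2 = ((Real.pi / 2 : ℝ) : ℂ) * Complex.I by
        push_cast; ring,
      Complex.exp_mul_I, ← Complex.ofReal_cos, ← Complex.ofReal_sin,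
      Real.cos_pi_div_two, Real.sin_pi_div_two]
    simp
  have key2 : ∀ w : ℂ,
      Complex.exp ((Real.pi : ℂ) * Complex.I / 2 - w * Complex.I)
        * (1 - Complex.exp (2 * w * Complex.I)) = 2 * Complex.sin w := by
    intro w
    have h1 : Complex.exp ((Real.pi : ℂ) * Complex.I / 2 - w * Complex.I)
        = Complex.I * Complex.exp (-(w * Complex.I)) := by
      rw [sub_eq_add_neg, Complex.exp_add, hI]
    have h2 : Complex.exp ((Real.pi : ℂ) * Complex.I / 2 - w * Complex.I)
        * Complex.exp (2 * w * Complex.I) = Complex.I * Complex.exp (w * Complex.I) := by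
      rw [← Complex.exp_add,
        show (Real.pi : ℂ) * Complex.I / 2 - w * Complex.I + 2 * w * Complex.I
          = (Real.pi : ℂ) * Complex.I / 2 + w * Complex.I by ring,
        Complex.exp_add, hI]
    rw [Complex.sin, mul_sub, mul_one, h2, h1]
    ring
  have hζk : ∀ k : ℕ, ζ ^ k
      = Complex.exp (2 * ((Real.pi : ℂ) * (k : ℂ) / (d : ℂ)) * Complex.I) := by
    intro k
    rw [hζdef, ← Complex.exp_nat_mul]
    congr 1
    ring
  have hone : ∏ k ∈ Finset.Icc 1 (d - 1), (1 - ζ ^ k) = (d : ℂ) := by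
    obtain ⟨m, rfl⟩ : ∃ m, d = m + 1 := ⟨d - 1, by omega⟩
    have h := hprim.prod_one_sub_pow_eq_order
    have hre : ∏ k ∈ Finset.range m, (1 - ζ ^ (k + 1))
        = ∏ k ∈ Finset.Icc 1 (m + 1 - 1), (1 - ζ ^ k) := by
      refine Finset.prod_nbij' (fun k => k + 1) (fun k => k - 1) ?_ ?_ ?_ ?_ ?_
      · intro a ha; simp only [Finset.mem_range] at ha; simp only [Finset.mem_Icc]; omega
      · intro a ha; simp only [Finset.mem_Icc] at ha; simp only [Finset.mem_range]; omega
      · intro a _; show a + 1 - 1 = a; omega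
      · intro a ha; simp only [Finset.mem_Icc] at ha; show a - 1 + 1 = a; omega
      · intro a _; rfl
    rw [← hre, h]
    push_cast
    ring
  have hGauss : (∑ k ∈ Finset.Icc 1 (d - 1), (k : ℂ)) * 2 = (d : ℂ) * ((d : ℂ) - 1) := by
    have h1 : (∑ i ∈ Finset.range d, i) * 2 = d * (d - 1) := Finset.sum_range_id_mul_two d
    have h2 : ∑ i ∈ Finset.range d, i = ∑ k ∈ Finset.Icc 1 (d - 1), k := by
      rw [hins, Finset.sum_insert hnotmem, zero_add]
    rw [h2] at h1
    have h3 := congrArg (Nat.cast : ℕ → ℂ) h1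
    push_cast [Nat.cast_sub hd] at h3
    exact h3
  have hsum0 : ∑ k ∈ Finset.Icc 1 (d - 1),
      ((Real.pi : ℂ) * Complex.I / 2 - (Real.pi : ℂ) * (k : ℂ) / (d : ℂ) * Complex.I) = 0 := by
    rw [Finset.sum_sub_distrib, Finset.sum_const, Nat.card_Icc]
    have hc : (d - 1 + 1 - 1 : ℕ) = d - 1 := by omega
    rw [hc]
    have hsplit : ∑ k ∈ Finset.Icc 1 (d - 1),
        (Real.pi : ℂ) * (k : ℂ) / (d : ℂ) * Complex.I
        = (Real.pi : ℂ) * Complex.I / (d : ℂ) * ∑ k ∈ Finset.Icc 1 (d - 1), (k : ℂ) := by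
      rw [Finset.mul_sum]
      exact Finset.sum_congr rfl fun k _ => by ring
    rw [hsplit, nsmul_eq_mul, Nat.cast_sub hd, Nat.cast_one]
    have h2d : (2 : ℂ) ≠ 0 := two_ne_zero
    field_simp
    linear_combination (-(Real.pi : ℂ) * Complex.I) * hGauss
  have hsin : ∏ k ∈ Finset.Icc 1 (d - 1),
      (((2 * Real.sin (Real.pi * (k : ℝ) / (d : ℝ)) : ℝ) : ℂ)) = (d : ℂ) := by
    have hfac : ∀ k ∈ Finset.Icc 1 (d - 1),
        (((2 * Real.sin (Real.pi * (k : ℝ) / (d : ℝ)) : ℝ) : ℂ))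
        = Complex.exp ((Real.pi : ℂ) * Complex.I / 2
            - (Real.pi : ℂ) * (k : ℂ) / (d : ℂ) * Complex.I) * (1 - ζ ^ k) := by
      intro k _
      have hc : (((2 * Real.sin (Real.pi * (k : ℝ) / (d : ℝ)) : ℝ) : ℂ))
          = 2 * Complex.sin ((Real.pi : ℂ) * (k : ℂ) / (d : ℂ)) := by
        push_cast [← Complex.ofReal_sin]
        norm_num
      rw [hc, ← key2 ((Real.pi : ℂ) * (k : ℂ) / (d : ℂ)), hζk k]
    rw [Finset.prod_congr rfl hfac, Finset.prod_mul_distrib, ← Complex.exp_sum, hsum0,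
      Complex.exp_zero, one_mul, hone]
  refine ⟨hM, (multipliable_prod hM).congr hkey, ?_⟩
  have hswap := (hasProd_prod fun k hk => (hM k hk).hasProd).tprod_eq
  rw [Finset.prod_mul_distrib, hsin, ← hswap]
  exact congrArg _ (tprod_congr hkey)

end RMV
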